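/- arXiv:2010.04352 — 9 statements merged into one kernel-verified Lean document; each statement's English description precedes it below -/
import Mathlib

section
/- Let φ : ℝ^d → ℝ be differentiable and m-strongly convex in the sense that ⟨∇φ(u) − ∇φ(v), u − v⟩ ≥ m ‖u − v‖² for all u, v ∈ ℝ^d, with m > 0. Let g : ℝ^d → ℝ^d satisfy ‖g(x) − ∇φ(x)‖ ≤ ε_g for all x, with ε_g ≥ 0. Fix x, p ∈ ℝ^d with p ≠ 0 and c₃ > 0. Then any β satisfying β ≥ 2(2 + c₃) ε_g / (m ‖p‖) satisfies the noise control condition ⟨g(x + β p) − g(x), p⟩ ≥ 2(1 + c₃) ε_g ‖p‖. -/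
/-! Strong monotonicity of `∇φ` along the ray `x + β p` gives
`⟪∇φ(x + β p) - ∇φ(x), p⟫ ≥ m β ‖p‖² ≥ 2(2 + c₃) ε_g ‖p‖`, and replacing `∇φ` by `g` at the
two points costs at most `2 ε_g ‖p‖` by Cauchy–Schwarz. -/

open scoped InnerProductSpace

section NoiseControl

variable {E : Type*} [NormedAddCommGroup E] [InnerProductSpace ℝ E]

theorem le_inner_sub_apply_add_smul {F : E → E} {m : ℝ}
    (hF : ∀ u v, m * ‖u - v‖ ^ 2 ≤ ⟪F u - F v, u - v⟫_ℝ) (x p : E) {β : ℝ} (hβ : 0 ≤ β) :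
    m * β * ‖p‖ ^ 2 ≤ ⟪F (x + β • p) - F x, p⟫_ℝ := by
  rcases hβ.eq_or_lt with rfl | hβ
  · simp
  have h := hF (x + β • p) x
  rw [add_sub_cancel_left, real_inner_smul_right, norm_smul, Real.norm_of_nonneg hβ.le] at h
  refine le_of_mul_le_mul_left ?_ hβ
  linarith

theorem inner_sub_sub_two_mul_le_of_norm_sub_le {α : Type*} {f F : α → E} {ε : ℝ}
    (h : ∀ y, ‖f y - F y‖ ≤ ε) (u v : α) (p : E) :
    ⟪F u - F v, p⟫_ℝ - 2 * ε * ‖p‖ ≤ ⟪f u - f v, p⟫_ℝ := by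
  have error_bound : ∀ y, |⟪f y - F y, p⟫_ℝ| ≤ ε * ‖p‖ := fun y =>
    (abs_real_inner_le_norm _ _).trans (mul_le_mul_of_nonneg_right (h y) (norm_nonneg p))
  have split : ⟪f u - f v, p⟫_ℝ = ⟪F u - F v, p⟫_ℝ + ⟪f u - F u, p⟫_ℝ - ⟪f v - F v, p⟫_ℝ := by
    rw [← inner_add_left, ← inner_sub_left]
    abel_nf
  rw [split]
  linarith [(abs_le.mp (error_bound u)).1, (abs_le.mp (error_bound v)).2]

end NoiseControl

theorem strongly_convex_beta_satisfies_noise_control_general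
    {d : ℕ} (φ : EuclideanSpace ℝ (Fin d) → ℝ)
    (m : ℝ) (hm : 0 < m)
    (hconv : ∀ u v : EuclideanSpace ℝ (Fin d),
      (inner ℝ (gradient φ u - gradient φ v) (u - v) : ℝ) ≥ m * ‖u - v‖ ^ 2)
    (g : EuclideanSpace ℝ (Fin d) → EuclideanSpace ℝ (Fin d))
    (εg : ℝ) (hεg : 0 ≤ εg)
    (hg : ∀ x, ‖g x - gradient φ x‖ ≤ εg)
    (x p : EuclideanSpace ℝ (Fin d)) (hp : p ≠ 0) (c₃ : ℝ) (hc₃ : 0 < c₃)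
    (β : ℝ) (hβ : β ≥ 2 * (2 + c₃) * εg / (m * ‖p‖)) :
    (inner ℝ (g (x + β • p) - g x) p : ℝ) ≥ 2 * (1 + c₃) * εg * ‖p‖ := by
  have hp_pos : 0 < ‖p‖ := norm_pos_iff.mpr hp
  have hmp : 0 < m * ‖p‖ := mul_pos hm hp_pos
  have hβ_nonneg : 0 ≤ β := (div_nonneg (by positivity) hmp.le).trans hβ
  have hβ_large : 2 * (2 + c₃) * εg * ‖p‖ ≤ m * β * ‖p‖ ^ 2 := by
    have := mul_le_mul_of_nonneg_right ((div_le_iff₀ hmp).mp hβ) hp_pos.le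
    linarith
  have gradient_gain := le_inner_sub_apply_add_smul hconv x p hβ_nonneg
  have noise_loss := inner_sub_sub_two_mul_le_of_norm_sub_le hg (x + β • p) x p
  linarith

/-- For an `m`-strongly convex function, any lengthening parameter
`β ≥ 2(2 + c₃) ε_g / (m ‖p‖)` satisfies the noise control condition. -/
theorem strongly_convex_beta_satisfies_noise_control
    {d : ℕ} (φ : EuclideanSpace ℝ (Fin d) → ℝ) (hφ : Differentiable ℝ φ)
    (m : ℝ) (hm : 0 < m)
    (hconv : ∀ u v : EuclideanSpace ℝ (Fin d),
      (inner ℝ (gradient φ u - gradient φ v) (u - v) : ℝ) ≥ m * ‖u - v‖ ^ 2)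
    (g : EuclideanSpace ℝ (Fin d) → EuclideanSpace ℝ (Fin d))
    (εg : ℝ) (hεg : 0 ≤ εg)
    (hg : ∀ x, ‖g x - gradient φ x‖ ≤ εg)
    (x p : EuclideanSpace ℝ (Fin d)) (hp : p ≠ 0) (c₃ : ℝ) (hc₃ : 0 < c₃)
    (β : ℝ) (hβ : β ≥ 2 * (2 + c₃) * εg / (m * ‖p‖)) :
    (inner ℝ (g (x + β • p) - g x) p : ℝ) ≥ 2 * (1 + c₃) * εg * ‖p‖ :=
  strongly_convex_beta_satisfies_noise_control_general φ m hm hconv g εg hεg hg x p hp c₃ hc₃ β hβ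
end

section
/- Let φ : ℝ^d → ℝ be differentiable and m-strongly convex in the sense that ⟨∇φ(u) − ∇φ(v), u − v⟩ ≥ m ‖u − v‖² for all u, v ∈ ℝ^d, with m > 0. Let g : ℝ^d → ℝ^d satisfy ‖g(x) − ∇φ(x)‖ ≤ ε_g for all x, with ε_g ≥ 0. Fix x, p ∈ ℝ^d with p ≠ 0. Then lim_{β → ∞} ⟨∇φ(x + β p), p⟩ = ∞, and for any c₃ > 0 there exists β̄ > 0 such that for all β ≥ β̄ the noise control condition ⟨g(x + β p) − g(x), p⟩ ≥ 2(1 + c₃) ε_g ‖p‖ holds. -/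
/-! Strong monotonicity of `∇φ`, tested on the pair `x + β • p`, `x`, gives
`⟪∇φ (x + β • p) - ∇φ x, p⟫ ≥ m β ‖p‖²`, so the directional derivative grows at least linearly
in `β`. Replacing `∇φ` by `g` costs at most `εg ‖p‖` at each of the two points, a constant
that the linear growth eventually beats. -/

open Filter
open scoped RealInnerProductSpace

section RayIncrement

variable {E : Type*} [NormedAddCommGroup E] [InnerProductSpace ℝ E]

theorem mul_norm_sq_le_inner_sub_add_smul {F : E → E} {m : ℝ}
    (hF : ∀ u v, m * ‖u - v‖ ^ 2 ≤ ⟪F u - F v, u - v⟫) (x p : E) {β : ℝ}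
    (hβ : 0 < β) :
    m * β * ‖p‖ ^ 2 ≤ ⟪F (x + β • p) - F x, p⟫ := by
  have h := hF (x + β • p) x
  rw [add_sub_cancel_left, real_inner_smul_right, norm_smul, Real.norm_of_nonneg hβ.le] at h
  exact le_of_mul_le_mul_left (by linarith) hβ

theorem tendsto_inner_sub_add_smul_atTop {F : E → E} {m : ℝ} (hm : 0 < m)
    (hF : ∀ u v, m * ‖u - v‖ ^ 2 ≤ ⟪F u - F v, u - v⟫) (x : E) {p : E} (hp : p ≠ 0) :
    Tendsto (fun β : ℝ => ⟪F (x + β • p) - F x, p⟫) atTop atTop := by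
  refine tendsto_atTop_mono' _ ?_
    (tendsto_id.const_mul_atTop (mul_pos hm (pow_pos (norm_pos_iff.mpr hp) 2)))
  filter_upwards [eventually_gt_atTop 0] with β hβ
  simpa only [id, mul_right_comm] using mul_norm_sq_le_inner_sub_add_smul hF x p hβ

theorem tendsto_inner_add_smul_atTop {F : E → E} {m : ℝ} (hm : 0 < m)
    (hF : ∀ u v, m * ‖u - v‖ ^ 2 ≤ ⟪F u - F v, u - v⟫) (x : E) {p : E} (hp : p ≠ 0) :
    Tendsto (fun β : ℝ => ⟪F (x + β • p), p⟫) atTop atTop :=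
  (tendsto_atTop_add_const_right _ ⟪F x, p⟫
    (tendsto_inner_sub_add_smul_atTop hm hF x hp)).congr
      fun β => by rw [inner_sub_left, sub_add_cancel]

theorem abs_inner_sub_sub_inner_sub_le {F G : E → E} {ε : ℝ} (hG : ∀ y, ‖G y - F y‖ ≤ ε)
    (a b p : E) : |⟪G a - G b, p⟫ - ⟪F a - F b, p⟫| ≤ 2 * ε * ‖p‖ := by
  rw [← inner_sub_left,
    show G a - G b - (F a - F b) = (G a - F a) - (G b - F b) by abel]
  calc |⟪(G a - F a) - (G b - F b), p⟫| ≤ ‖(G a - F a) - (G b - F b)‖ * ‖p‖ :=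
        abs_real_inner_le_norm _ _
    _ ≤ (ε + ε) * ‖p‖ := by gcongr; exact (norm_sub_le _ _).trans (add_le_add (hG a) (hG b))
    _ = 2 * ε * ‖p‖ := by ring

theorem tendsto_inner_sub_add_smul_atTop_of_norm_sub_le {F G : E → E} {m ε : ℝ} (hm : 0 < m)
    (hF : ∀ u v, m * ‖u - v‖ ^ 2 ≤ ⟪F u - F v, u - v⟫) (hG : ∀ y, ‖G y - F y‖ ≤ ε)
    (x : E) {p : E} (hp : p ≠ 0) :
    Tendsto (fun β : ℝ => ⟪G (x + β • p) - G x, p⟫) atTop atTop := by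
  refine tendsto_atTop_mono (fun β => ?_) (tendsto_atTop_add_const_right _ (-(2 * ε * ‖p‖))
    (tendsto_inner_sub_add_smul_atTop hm hF x hp))
  linarith [abs_le.mp (abs_inner_sub_sub_inner_sub_le hG (x + β • p) x p)]

end RayIncrement

theorem lengthening_terminates_for_strongly_convex_general
    {d : ℕ} (φ : EuclideanSpace ℝ (Fin d) → ℝ)
    (m : ℝ) (hm : 0 < m)
    (hconv : ∀ u v : EuclideanSpace ℝ (Fin d),
      (inner ℝ (gradient φ u - gradient φ v) (u - v) : ℝ) ≥ m * ‖u - v‖ ^ 2)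
    (g : EuclideanSpace ℝ (Fin d) → EuclideanSpace ℝ (Fin d))
    (εg : ℝ)
    (hg : ∀ x, ‖g x - gradient φ x‖ ≤ εg)
    (x p : EuclideanSpace ℝ (Fin d)) (hp : p ≠ 0) :
    Filter.Tendsto (fun β : ℝ => (inner ℝ (gradient φ (x + β • p)) p : ℝ))
        Filter.atTop Filter.atTop ∧
      ∀ c₃ : ℝ, 0 < c₃ → ∃ βbar : ℝ, 0 < βbar ∧ ∀ β : ℝ, β ≥ βbar →
        (inner ℝ (g (x + β • p) - g x) p : ℝ) ≥ 2 * (1 + c₃) * εg * ‖p‖ := by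
  refine ⟨tendsto_inner_add_smul_atTop hm hconv x hp, fun c₃ _ => ?_⟩
  obtain ⟨β₀, hβ₀⟩ := ((tendsto_inner_sub_add_smul_atTop_of_norm_sub_le hm hconv hg x hp)
    |>.eventually_ge_atTop (2 * (1 + c₃) * εg * ‖p‖)).exists_forall_of_atTop
  exact ⟨max β₀ 1, by positivity, fun β hβ => hβ₀ β (le_of_max_le_left hβ)⟩

/-- For an `m`-strongly convex function, the directional derivative along a nonzero
direction `p` tends to infinity with the steplength, and consequently the lengthening
procedure terminates finitely: there is `β̄ > 0` such that the noise control condition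
holds for every `β ≥ β̄`. -/
theorem lengthening_terminates_for_strongly_convex
    {d : ℕ} (φ : EuclideanSpace ℝ (Fin d) → ℝ) (hφ : Differentiable ℝ φ)
    (m : ℝ) (hm : 0 < m)
    (hconv : ∀ u v : EuclideanSpace ℝ (Fin d),
      (inner ℝ (gradient φ u - gradient φ v) (u - v) : ℝ) ≥ m * ‖u - v‖ ^ 2)
    (g : EuclideanSpace ℝ (Fin d) → EuclideanSpace ℝ (Fin d))
    (εg : ℝ) (hεg : 0 ≤ εg)
    (hg : ∀ x, ‖g x - gradient φ x‖ ≤ εg)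
    (x p : EuclideanSpace ℝ (Fin d)) (hp : p ≠ 0) :
    Filter.Tendsto (fun β : ℝ => (inner ℝ (gradient φ (x + β • p)) p : ℝ))
        Filter.atTop Filter.atTop ∧
      ∀ c₃ : ℝ, 0 < c₃ → ∃ βbar : ℝ, 0 < βbar ∧ ∀ β : ℝ, β ≥ βbar →
        (inner ℝ (g (x + β • p) - g x) p : ℝ) ≥ 2 * (1 + c₃) * εg * ‖p‖ :=
  lengthening_terminates_for_strongly_convex_general φ m hm hconv g εg hg x p hp
end

section
/- Let φ : ℝ^d → ℝ be differentiable with ⟨∇φ(u) − ∇φ(v), u − v⟩ ≥ m ‖u − v‖² for all u, v ∈ ℝ^d, where m > 0. Let g : ℝ^d → ℝ^d satisfy ‖g(x) − ∇φ(x)‖ ≤ ε_g for all x, with ε_g > 0. Fix x ∈ ℝ^d and s ∈ ℝ^d with s ≠ 0, let y = g(x + s) − g(x), and suppose ⟨s, y⟩ ≥ c ε_g ‖s‖ for some constant c > 2. Then ⟨s, y⟩ / ⟨s, s⟩ ≥ (c/(c+2)) m. -/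
/-! The noise in `g` moves `⟨s, y⟩` by at most `2 εg ‖s‖` away from the true curvature
`⟨s, ∇φ(x + s) - ∇φ(x)⟩ ≥ m ‖s‖²`. The noise control condition bounds `2 εg ‖s‖` by
`(2 / c) ⟨s, y⟩`, so `(1 + 2 / c) ⟨s, y⟩ ≥ m ‖s‖²`. -/

open RealInnerProductSpace

section

variable {E : Type*} [NormedAddCommGroup E] [InnerProductSpace ℝ E]

theorem inner_sub_sub_le_of_norm_sub_le {F G : E → E} {ε : ℝ} (hFG : ∀ z, ‖F z - G z‖ ≤ ε)
    (x s : E) : ⟪s, G (x + s) - G x⟫ - 2 * ε * ‖s‖ ≤ ⟪s, F (x + s) - F x⟫ := by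
  set e := (F (x + s) - G (x + s)) - (F x - G x)
  have he : ‖e‖ ≤ 2 * ε := (norm_sub_le _ _).trans (by linarith [hFG (x + s), hFG x])
  have hcs : -(‖s‖ * ‖e‖) ≤ ⟪s, e⟫ := (abs_le.mp (abs_real_inner_le_norm s e)).1
  have hsplit : F (x + s) - F x = (G (x + s) - G x) + e := by
    simp only [e]; abel
  rw [hsplit, inner_add_right]
  nlinarith [norm_nonneg s]

end

theorem mul_le_of_sub_le_of_mul_le {a M e c : ℝ} (hc : 0 < c) (hM : M - 2 * e ≤ a)
    (hce : c * e ≤ a) : c / (c + 2) * M ≤ a := by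
  rw [div_mul_eq_mul_div, div_le_iff₀ (by linarith)]
  nlinarith [mul_le_mul_of_nonneg_left hM hc.le]

theorem curvature_ratio_lower_bound_general
    {d : ℕ} (φ : EuclideanSpace ℝ (Fin d) → ℝ)
    (m : ℝ)
    (hconv : ∀ u v : EuclideanSpace ℝ (Fin d),
      (inner ℝ (gradient φ u - gradient φ v) (u - v) : ℝ) ≥ m * ‖u - v‖ ^ 2)
    (g : EuclideanSpace ℝ (Fin d) → EuclideanSpace ℝ (Fin d))
    (εg : ℝ)
    (hg : ∀ x, ‖g x - gradient φ x‖ ≤ εg)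
    (x s : EuclideanSpace ℝ (Fin d)) (hs : s ≠ 0)
    (y : EuclideanSpace ℝ (Fin d)) (hy : y = g (x + s) - g x)
    (c : ℝ) (hc : 2 < c)
    (hnc : (inner ℝ s y : ℝ) ≥ c * εg * ‖s‖) :
    (inner ℝ s y : ℝ) / (inner ℝ s s : ℝ) ≥ (c / (c + 2)) * m := by
  have hstrong : m * ‖s‖ ^ 2 ≤ ⟪s, gradient φ (x + s) - gradient φ x⟫ := by
    simpa [real_inner_comm] using hconv (x + s) x
  have hnoise := inner_sub_sub_le_of_norm_sub_le hg x s
  rw [← hy] at hnoise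
  rw [ge_iff_le, real_inner_self_eq_norm_sq, le_div_iff₀ (by positivity), mul_assoc]
  exact mul_le_of_sub_le_of_mul_le (e := εg * ‖s‖) (by linarith) (by linarith) (by linarith)

/-- First inequality of Lemma 3.1: under the noise control condition with constant `c > 2`,
the observed curvature ratio `⟨s, y⟩ / ⟨s, s⟩` is bounded below by `(c/(c+2)) m`. -/
theorem curvature_ratio_lower_bound
    {d : ℕ} (φ : EuclideanSpace ℝ (Fin d) → ℝ) (hφ : Differentiable ℝ φ)
    (m : ℝ) (hm : 0 < m)
    (hconv : ∀ u v : EuclideanSpace ℝ (Fin d),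
      (inner ℝ (gradient φ u - gradient φ v) (u - v) : ℝ) ≥ m * ‖u - v‖ ^ 2)
    (g : EuclideanSpace ℝ (Fin d) → EuclideanSpace ℝ (Fin d))
    (εg : ℝ) (hεg : 0 < εg)
    (hg : ∀ x, ‖g x - gradient φ x‖ ≤ εg)
    (x s : EuclideanSpace ℝ (Fin d)) (hs : s ≠ 0)
    (y : EuclideanSpace ℝ (Fin d)) (hy : y = g (x + s) - g x)
    (c : ℝ) (hc : 2 < c)
    (hnc : (inner ℝ s y : ℝ) ≥ c * εg * ‖s‖) :
    (inner ℝ s y : ℝ) / (inner ℝ s s : ℝ) ≥ (c / (c + 2)) * m :=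
  curvature_ratio_lower_bound_general φ m hconv g εg hg x s hs y hy c hc hnc
end

section
/- Let φ : ℝ^d → ℝ be differentiable with M-Lipschitz gradient: ‖∇φ(u) − ∇φ(v)‖ ≤ M ‖u − v‖ for all u, v ∈ ℝ^d, where M > 0. Let g : ℝ^d → ℝ^d satisfy ‖g(x) − ∇φ(x)‖ ≤ ε_g for all x, with ε_g > 0. Fix x ∈ ℝ^d and s ∈ ℝ^d with s ≠ 0, let y = g(x + s) − g(x), and suppose ⟨s, y⟩ ≥ c ε_g ‖s‖ for some constant c > 2. Then ‖s‖ ≥ (c − 2) ε_g / M. -/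
open scoped RealInnerProductSpace

/-! Cauchy–Schwarz turns the noise control condition into `c εg ≤ ‖y‖`, while comparing `g` with
`∇φ` at both ends of the step gives `‖y‖ ≤ M ‖s‖ + 2 εg`. -/

theorem norm_sub_le_of_approx_lipschitz {E F : Type*} [SeminormedAddCommGroup E]
    [SeminormedAddCommGroup F] {g G : E → F} {M ε : ℝ}
    (hG : ∀ u v, ‖G u - G v‖ ≤ M * ‖u - v‖) (hg : ∀ x, ‖g x - G x‖ ≤ ε) (u v : E) :
    ‖g u - g v‖ ≤ M * ‖u - v‖ + 2 * ε := by
  have hgv : dist (G v) (g v) ≤ ε := by rw [dist_comm, dist_eq_norm]; exact hg v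
  calc ‖g u - g v‖ = dist (g u) (g v) := (dist_eq_norm _ _).symm
    _ ≤ dist (g u) (G u) + dist (G u) (G v) + dist (G v) (g v) := dist_triangle4 _ _ _ _
    _ ≤ ε + M * ‖u - v‖ + ε := by
      rw [dist_eq_norm (g u), dist_eq_norm (G u)]
      gcongr
      exacts [hg u, hG u v]
    _ = M * ‖u - v‖ + 2 * ε := by ring

theorem le_norm_of_mul_norm_le_inner {E : Type*} [NormedAddCommGroup E] [InnerProductSpace ℝ E]
    {s y : E} {a : ℝ} (hs : s ≠ 0) (h : a * ‖s‖ ≤ ⟪s, y⟫) : a ≤ ‖y‖ := by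
  have hpos : 0 < ‖s‖ := norm_pos_iff.mpr hs
  refine le_of_mul_le_mul_right ?_ hpos
  calc a * ‖s‖ ≤ ⟪s, y⟫ := h
    _ ≤ ‖s‖ * ‖y‖ := real_inner_le_norm s y
    _ = ‖y‖ * ‖s‖ := mul_comm _ _

theorem step_length_lower_bound_general
    {d : ℕ} (φ : EuclideanSpace ℝ (Fin d) → ℝ)
    (M : ℝ) (hM : 0 < M)
    (hlip : ∀ u v : EuclideanSpace ℝ (Fin d),
      ‖gradient φ u - gradient φ v‖ ≤ M * ‖u - v‖)
    (g : EuclideanSpace ℝ (Fin d) → EuclideanSpace ℝ (Fin d))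
    (εg : ℝ)
    (hg : ∀ x, ‖g x - gradient φ x‖ ≤ εg)
    (x s : EuclideanSpace ℝ (Fin d)) (hs : s ≠ 0)
    (y : EuclideanSpace ℝ (Fin d)) (hy : y = g (x + s) - g x)
    (c : ℝ)
    (hnc : (inner ℝ s y : ℝ) ≥ c * εg * ‖s‖) :
    ‖s‖ ≥ (c - 2) * εg / M := by
  have hy_lower : c * εg ≤ ‖y‖ := le_norm_of_mul_norm_le_inner hs hnc
  have hy_upper : ‖y‖ ≤ M * ‖s‖ + 2 * εg := by
    simpa [hy] using norm_sub_le_of_approx_lipschitz hlip hg (x + s) x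
  rw [ge_iff_le, div_le_iff₀ hM]
  linarith

/-- Lower bound on the step length implied by the noise control condition with `c > 2`
when `∇φ` is `M`-Lipschitz (intermediate step in the proof of Lemma 3.1). -/
theorem step_length_lower_bound
    {d : ℕ} (φ : EuclideanSpace ℝ (Fin d) → ℝ) (hφ : Differentiable ℝ φ)
    (M : ℝ) (hM : 0 < M)
    (hlip : ∀ u v : EuclideanSpace ℝ (Fin d),
      ‖gradient φ u - gradient φ v‖ ≤ M * ‖u - v‖)
    (g : EuclideanSpace ℝ (Fin d) → EuclideanSpace ℝ (Fin d))
    (εg : ℝ) (hεg : 0 < εg)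
    (hg : ∀ x, ‖g x - gradient φ x‖ ≤ εg)
    (x s : EuclideanSpace ℝ (Fin d)) (hs : s ≠ 0)
    (y : EuclideanSpace ℝ (Fin d)) (hy : y = g (x + s) - g x)
    (c : ℝ) (hc : 2 < c)
    (hnc : (inner ℝ s y : ℝ) ≥ c * εg * ‖s‖) :
    ‖s‖ ≥ (c - 2) * εg / M :=
  step_length_lower_bound_general φ M hM hlip g εg hg x s hs y hy c hnc
end

section
/- Let φ : ℝ^d → ℝ be differentiable and satisfy, for constants 0 < m ≤ M and all u, v ∈ ℝ^d: ⟨∇φ(u) − ∇φ(v), u − v⟩ ≥ m ‖u − v‖² and ‖∇φ(u) − ∇φ(v)‖ ≤ M ‖u − v‖. Fix x ∈ ℝ^d, s ∈ ℝ^d with s ≠ 0, ε_g ≥ 0, and let y ∈ ℝ^d satisfy ‖y − (∇φ(x + s) − ∇φ(x))‖ ≤ 2 ε_g and ⟨s, y⟩ > 0. Then ⟨y, y⟩ / ⟨s, y⟩ ≤ (M + m) + (2ε_g + M‖s‖)(2ε_g − m‖s‖) / ⟨s, y⟩. -/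
/-!
Let `g = ∇φ(x + s) - ∇φ(x)`. Since `φ - m/2 ‖·‖²` is convex with `(M - m)`-Lipschitz gradient,
the Baillon–Haddad theorem makes its gradient `(M - m)⁻¹`-cocoercive, which says that `g` lies in
the ball of radius `(M - m)‖s‖/2` about `(M + m)s/2`. Writing `y = g + e` with `‖e‖ ≤ 2ε_g`,
`⟪y, y⟫ - (M + m)⟪s, y⟫ = ‖g‖² - (M + m)⟪g, s⟫ + ⟪2g - (M + m)s, e⟫ + ‖e‖²`; the ball bounds
the first two terms by `-Mm‖s‖²` and, with Cauchy–Schwarz, the cross term by `(M - m)‖s‖ · 2ε_g`.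
-/

open RealInnerProductSpace

section InnerProductSpace

variable {F : Type*} [NormedAddCommGroup F] [InnerProductSpace ℝ F]

noncomputable def bregmanGap (f : F → ℝ) (G : F → F) (u v : F) : ℝ :=
  f v - f u - ⟪G u, v - u⟫

theorem bregmanGap_add_bregmanGap (f : F → ℝ) (G : F → F) (u v : F) :
    bregmanGap f G u v + bregmanGap f G v u = ⟪G u - G v, u - v⟫ := by
  simp only [bregmanGap, inner_sub_left, inner_sub_right]
  ring

theorem bregmanGap_neg (f : F → ℝ) (G : F → F) (u v : F) :
    bregmanGap (fun w ↦ -f w) (fun w ↦ -G w) u v = -bregmanGap f G u v := by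
  simp only [bregmanGap, inner_neg_left]
  ring

theorem bregmanGap_sub_half_mul_norm_sq (f : F → ℝ) (G : F → F) (c : ℝ) (u v : F) :
    bregmanGap (fun w ↦ f w - c / 2 * ‖w‖ ^ 2) (fun w ↦ G w - c • w) u v =
      bregmanGap f G u v - c / 2 * ‖v - u‖ ^ 2 := by
  simp only [bregmanGap, inner_sub_left, inner_sub_right, real_inner_smul_left,
    norm_sub_sq_real, real_inner_self_eq_norm_sq, real_inner_comm u v]
  ring

theorem sq_norm_sub_div_le_bregmanGap {f : F → ℝ} {G : F → F} {L : ℝ} (hL : 0 < L)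
    (hlow : ∀ u v, 0 ≤ bregmanGap f G u v)
    (hup : ∀ u v, bregmanGap f G u v ≤ L / 2 * ‖v - u‖ ^ 2) (u v : F) :
    ‖G v - G u‖ ^ 2 / (2 * L) ≤ bregmanGap f G u v := by
  set h := G v - G u
  set z := v - L⁻¹ • h
  have hlow_z := hlow u z
  have hup_z := hup v z
  have hzv : z - v = -(L⁻¹ • h) := by simp [z]
  have hzu : z - u = (v - u) - L⁻¹ • h := by simp only [z]; abel
  simp only [bregmanGap, hzv, hzu, inner_neg_right, inner_sub_right, real_inner_smul_right,
    norm_neg, norm_smul, Real.norm_eq_abs, abs_inv, abs_of_pos hL] at hlow_z hup_z ⊢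
  have hh : ⟪G v, h⟫ - ⟪G u, h⟫ = ‖h‖ ^ 2 := by
    rw [← inner_sub_left, real_inner_self_eq_norm_sq]
  field_simp at hlow_z hup_z ⊢
  nlinarith

theorem sq_norm_sub_le_mul_inner_of_bregmanGap_bounds {f : F → ℝ} {G : F → F} {L : ℝ}
    (hL : 0 < L) (hlow : ∀ u v, 0 ≤ bregmanGap f G u v)
    (hup : ∀ u v, bregmanGap f G u v ≤ L / 2 * ‖v - u‖ ^ 2) (u v : F) :
    ‖G u - G v‖ ^ 2 ≤ L * ⟪G u - G v, u - v⟫ := by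
  have h₁ := sq_norm_sub_div_le_bregmanGap hL hlow hup u v
  have h₂ := sq_norm_sub_div_le_bregmanGap hL hlow hup v u
  rw [norm_sub_rev] at h₁
  calc ‖G u - G v‖ ^ 2
      = L * (‖G u - G v‖ ^ 2 / (2 * L) + ‖G u - G v‖ ^ 2 / (2 * L)) := by field_simp; ring
    _ ≤ L * (bregmanGap f G v u + bregmanGap f G u v) := by gcongr
    _ = L * ⟪G u - G v, u - v⟫ := by rw [add_comm, bregmanGap_add_bregmanGap]

theorem norm_two_smul_sub_le_of_sq_norm_le_mul_inner {a b : F} {L : ℝ} (hL : 0 ≤ L)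
    (h : ‖a‖ ^ 2 ≤ L * ⟪a, b⟫) : ‖(2 : ℝ) • a - L • b‖ ≤ L * ‖b‖ := by
  refine (sq_le_sq₀ (norm_nonneg _) (by positivity)).1 ?_
  rw [norm_sub_sq_real, norm_smul, norm_smul, real_inner_smul_left, real_inner_smul_right,
    Real.norm_of_nonneg hL, Real.norm_two]
  nlinarith

theorem inner_self_le_of_norm_two_smul_sub_le {g s y : F} {m M δ : ℝ}
    (hg : ‖(2 : ℝ) • g - (M + m) • s‖ ≤ (M - m) * ‖s‖) (hy : ‖y - g‖ ≤ δ) :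
    ⟪y, y⟫ ≤ (M + m) * ⟪s, y⟫ + (δ + M * ‖s‖) * (δ - m * ‖s‖) := by
  set w := (2 : ℝ) • g - (M + m) • s
  set e := y - g
  have hsplit : ⟪y, y⟫ - (M + m) * ⟪s, y⟫ =
      (‖w‖ ^ 2 - (M + m) ^ 2 * ‖s‖ ^ 2) / 4 + ⟪w, e⟫ + ‖e‖ ^ 2 := by
    have hy : y = g + e := by simp [e]
    rw [hy]
    simp only [w, ← real_inner_self_eq_norm_sq, inner_add_left, inner_add_right, inner_sub_left,
      inner_sub_right, real_inner_smul_left, real_inner_smul_right, real_inner_comm g s,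
      real_inner_comm g e]
    ring
  have hwe : ⟪w, e⟫ ≤ (M - m) * ‖s‖ * δ :=
    (real_inner_le_norm w e).trans
      (mul_le_mul hg hy (norm_nonneg e) ((norm_nonneg w).trans hg))
  have hw : ‖w‖ ^ 2 ≤ ((M - m) * ‖s‖) ^ 2 := pow_le_pow_left₀ (norm_nonneg w) hg 2
  have he : ‖e‖ ^ 2 ≤ δ ^ 2 := pow_le_pow_left₀ (norm_nonneg e) hy 2
  nlinarith

end InnerProductSpace

section Gradient

variable {F : Type*} [NormedAddCommGroup F] [InnerProductSpace ℝ F] [CompleteSpace F]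
  {f : F → ℝ} {G : F → F}

theorem hasDerivAt_comp_add_smul (hf : ∀ w, HasGradientAt f (G w) w) (u d : F) (t : ℝ) :
    HasDerivAt (fun t : ℝ ↦ f (u + t • d)) ⟪G (u + t • d), d⟫ t := by
  have hline : HasDerivAt (fun t : ℝ ↦ u + t • d) d t := by
    simpa using ((hasDerivAt_id t).smul_const d).const_add u
  exact (hasGradientAt_iff_hasFDerivAt.mp (hf (u + t • d))).comp_hasDerivAt t hline

theorem HasGradientAt.neg {x g : F} (h : HasGradientAt f g x) :
    HasGradientAt (fun w ↦ -f w) (-g) x := by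
  rw [hasGradientAt_iff_hasFDerivAt, map_neg]
  exact (hasGradientAt_iff_hasFDerivAt.mp h).neg

theorem half_mul_sq_le_bregmanGap (hf : ∀ w, HasGradientAt f (G w) w) {c : ℝ}
    (hG : ∀ u v, c * ‖u - v‖ ^ 2 ≤ ⟪G u - G v, u - v⟫) (u v : F) :
    c / 2 * ‖v - u‖ ^ 2 ≤ bregmanGap f G u v := by
  set d := v - u
  -- `k 1 - k 0 = bregmanGap f G u v - c / 2 * ‖d‖ ^ 2`, and `k' t ≥ 0` on `[0, 1]` is `hG`
  -- at `u + t • d` and `u`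
  set k : ℝ → ℝ := fun t ↦ f (u + t • d) - t * ⟪G u, d⟫ - c / 2 * t ^ 2 * ‖d‖ ^ 2
  have hk : ∀ t, HasDerivAt k (⟪G (u + t • d), d⟫ - ⟪G u, d⟫ - c * t * ‖d‖ ^ 2) t := fun t ↦
    (((hasDerivAt_comp_add_smul hf u d t).sub
      ((hasDerivAt_id t).mul_const ⟪G u, d⟫)).sub
      (((hasDerivAt_pow 2 t).const_mul (c / 2)).mul_const (‖d‖ ^ 2))).congr_deriv
      (by push_cast; ring)
  have hmono : MonotoneOn k (Set.Icc 0 1) := by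
    refine monotoneOn_of_hasDerivWithinAt_nonneg (convex_Icc 0 1)
      (fun t _ ↦ (hk t).continuousAt.continuousWithinAt) (fun t _ ↦ (hk t).hasDerivWithinAt) ?_
    intro t ht
    rw [interior_Icc] at ht
    replace ht := ht.1
    have h := hG (u + t • d) u
    rw [add_sub_cancel_left, inner_smul_right, norm_smul, Real.norm_eq_abs, abs_of_pos ht,
      inner_sub_left] at h
    nlinarith
  have h01 : k 0 ≤ k 1 := hmono (by simp) (by simp) zero_le_one
  have hk0 : k 0 = f u := by simp [k]
  have hk1 : k 1 = f v - ⟪G u, v - u⟫ - c / 2 * ‖v - u‖ ^ 2 := by simp [k, d]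
  rw [bregmanGap]
  linarith

theorem bregmanGap_le_half_mul_sq (hf : ∀ w, HasGradientAt f (G w) w) {C : ℝ}
    (hG : ∀ u v, ⟪G u - G v, u - v⟫ ≤ C * ‖u - v‖ ^ 2) (u v : F) :
    bregmanGap f G u v ≤ C / 2 * ‖v - u‖ ^ 2 := by
  have hneg : ∀ u v, -C * ‖u - v‖ ^ 2 ≤ ⟪-G u - -G v, u - v⟫ := by
    intro u v
    rw [neg_sub_neg, ← neg_sub (G u) (G v), inner_neg_left]
    linarith [hG u v]
  have := half_mul_sq_le_bregmanGap (fun w ↦ (hf w).neg) hneg u v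
  rw [bregmanGap_neg] at this
  linarith

theorem norm_two_smul_sub_le_of_strongly_monotone_of_lipschitz
    (hf : ∀ w, HasGradientAt f (G w) w) {m M : ℝ} (hmM : m ≤ M)
    (hconv : ∀ u v, m * ‖u - v‖ ^ 2 ≤ ⟪G u - G v, u - v⟫)
    (hlip : ∀ u v, ‖G u - G v‖ ≤ M * ‖u - v‖) (u v : F) :
    ‖(2 : ℝ) • (G u - G v) - (M + m) • (u - v)‖ ≤ (M - m) * ‖u - v‖ := by
  have hsmooth : ∀ u v, ⟪G u - G v, u - v⟫ ≤ M * ‖u - v‖ ^ 2 := fun u v ↦ by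
    nlinarith [real_inner_le_norm (G u - G v) (u - v), hlip u v, norm_nonneg (u - v)]
  suffices h : ‖G u - G v - m • (u - v)‖ ^ 2 ≤ (M - m) * ⟪G u - G v - m • (u - v), u - v⟫ by
    convert norm_two_smul_sub_le_of_sq_norm_le_mul_inner (sub_nonneg.2 hmM) h using 2
    module
  rcases hmM.eq_or_lt with rfl | hlt
  · have hinner : ⟪G u - G v, u - v⟫ = m * ‖u - v‖ ^ 2 := (hsmooth u v).antisymm (hconv u v)
    have hnorm : ‖G u - G v‖ ^ 2 ≤ (m * ‖u - v‖) ^ 2 :=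
      pow_le_pow_left₀ (norm_nonneg _) (hlip u v) 2
    rw [sub_self, zero_mul, norm_sub_sq_real, real_inner_smul_right, hinner, norm_smul,
      Real.norm_eq_abs, mul_pow, sq_abs]
    nlinarith
  · -- Baillon–Haddad for the convex, `(M - m)`-smooth function `f - m/2 ‖·‖²`
    have hlow : ∀ u v, 0 ≤ bregmanGap (fun w ↦ f w - m / 2 * ‖w‖ ^ 2) (fun w ↦ G w - m • w) u v :=
      fun u v ↦ by
        rw [bregmanGap_sub_half_mul_norm_sq]
        linarith [half_mul_sq_le_bregmanGap hf hconv u v]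
    have hup : ∀ u v, bregmanGap (fun w ↦ f w - m / 2 * ‖w‖ ^ 2) (fun w ↦ G w - m • w) u v ≤
        (M - m) / 2 * ‖v - u‖ ^ 2 := fun u v ↦ by
      rw [bregmanGap_sub_half_mul_norm_sq]
      linarith [bregmanGap_le_half_mul_sq hf hsmooth u v]
    convert sq_norm_sub_le_mul_inner_of_bregmanGap_bounds (sub_pos.2 hlt) hlow hup u v using 3 <;>
      module

end Gradient

theorem noisy_curvature_upper_bound_general_general
    {d : ℕ} (φ : EuclideanSpace ℝ (Fin d) → ℝ) (hφ : Differentiable ℝ φ)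
    (m M : ℝ) (hmM : m ≤ M)
    (hconv : ∀ u v : EuclideanSpace ℝ (Fin d),
      (inner ℝ (gradient φ u - gradient φ v) (u - v) : ℝ) ≥ m * ‖u - v‖ ^ 2)
    (hlip : ∀ u v : EuclideanSpace ℝ (Fin d),
      ‖gradient φ u - gradient φ v‖ ≤ M * ‖u - v‖)
    (x s : EuclideanSpace ℝ (Fin d))
    (εg : ℝ)
    (y : EuclideanSpace ℝ (Fin d))
    (hy : ‖y - (gradient φ (x + s) - gradient φ x)‖ ≤ 2 * εg)
    (hsy : (inner ℝ s y : ℝ) > 0) :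
    (inner ℝ y y : ℝ) / (inner ℝ s y : ℝ) ≤
      (M + m) + (2 * εg + M * ‖s‖) * (2 * εg - m * ‖s‖) / (inner ℝ s y : ℝ) := by
  have hcurv := norm_two_smul_sub_le_of_strongly_monotone_of_lipschitz
    (fun w ↦ (hφ w).hasGradientAt) hmM hconv hlip (x + s) x
  rw [add_sub_cancel_left] at hcurv
  rw [div_le_iff₀ hsy, add_mul, div_mul_cancel₀ _ hsy.ne']
  exact inner_self_le_of_norm_two_smul_sub_le hcurv hy

/-- Inequality (3.10) in the proof of Lemma 3.1: bound on `⟨y, y⟩ / ⟨s, y⟩` for a noisy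
gradient difference `y` deviating by at most `2 ε_g` from the true difference. -/
theorem noisy_curvature_upper_bound_general
    {d : ℕ} (φ : EuclideanSpace ℝ (Fin d) → ℝ) (hφ : Differentiable ℝ φ)
    (m M : ℝ) (hm : 0 < m) (hmM : m ≤ M)
    (hconv : ∀ u v : EuclideanSpace ℝ (Fin d),
      (inner ℝ (gradient φ u - gradient φ v) (u - v) : ℝ) ≥ m * ‖u - v‖ ^ 2)
    (hlip : ∀ u v : EuclideanSpace ℝ (Fin d),
      ‖gradient φ u - gradient φ v‖ ≤ M * ‖u - v‖)
    (x s : EuclideanSpace ℝ (Fin d)) (hs : s ≠ 0)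
    (εg : ℝ) (hεg : 0 ≤ εg)
    (y : EuclideanSpace ℝ (Fin d))
    (hy : ‖y - (gradient φ (x + s) - gradient φ x)‖ ≤ 2 * εg)
    (hsy : (inner ℝ s y : ℝ) > 0) :
    (inner ℝ y y : ℝ) / (inner ℝ s y : ℝ) ≤
      (M + m) + (2 * εg + M * ‖s‖) * (2 * εg - m * ‖s‖) / (inner ℝ s y : ℝ) :=
  noisy_curvature_upper_bound_general_general φ hφ m M hmM hconv hlip x s εg y hy hsy
end

section
/- Let φ : ℝ^d → ℝ be differentiable and satisfy, for constants 0 < m ≤ M and all u, v ∈ ℝ^d: ⟨∇φ(u) − ∇φ(v), u − v⟩ ≥ m ‖u − v‖² and ‖∇φ(u) − ∇φ(v)‖ ≤ M ‖u − v‖. Fix x ∈ ℝ^d, s ∈ ℝ^d with s ≠ 0, ε_g ≥ 0, and let y ∈ ℝ^d satisfy ‖y − (∇φ(x + s) − ∇φ(x))‖ ≤ 2 ε_g and ⟨s, y⟩ > 0. If additionally 2ε_g < m ‖s‖, then ⟨y, y⟩ / ⟨s, y⟩ ≤ M + 2ε_g / ‖s‖. -/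
/-!
Write `Δ = ∇φ(x + s) - ∇φ x`. The function `φ - (m / 2) ‖·‖²` is convex and `(M - m)`-smooth, so
co-coercivity of its gradient gives `‖Δ - m s‖² ≤ (M - m) ⟪Δ - m s, s⟫`. An inequality
`‖q‖² ≤ c ⟪q, s⟫` says exactly that `q` lies in the closed ball of centre `(c / 2) s` and radius
`(c / 2) ‖s‖`; thus `Δ` lies in the ball of centre `((M + m) / 2) s` and radius `((M - m) / 2) ‖s‖`.
Enlarging that ball by `2 ε_g` keeps it inside the ball for `c = M + 2 ε_g / ‖s‖` as long as
`2 ε_g ≤ m ‖s‖`, and `y` lies in the enlarged ball.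
-/

open scoped RealInnerProductSpace

section

variable {E : Type*} [NormedAddCommGroup E] [InnerProductSpace ℝ E]

/-- Co-coercivity (Baillon–Haddad), from the first-order bounds alone. -/
theorem norm_sub_sq_le_mul_inner_sub {f : E → ℝ} {g : E → E} {L : ℝ} (hL : 0 ≤ L)
    (hlow : ∀ a b, f a + ⟪g a, b - a⟫ ≤ f b)
    (hup : ∀ a b, f b ≤ f a + ⟪g a, b - a⟫ + L / 2 * ‖b - a‖ ^ 2) (a b : E) :
    ‖g b - g a‖ ^ 2 ≤ L * ⟪g b - g a, b - a⟫ := by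
  -- compare `f` at `b - τ • (g b - g a)` with the lower bound from `a` and the upper one from `b`
  have hgap : ∀ a b τ, (τ - L / 2 * τ ^ 2) * ‖g b - g a‖ ^ 2 ≤ f b - f a - ⟪g a, b - a⟫ := by
    intro a b τ
    have h1 := hlow a (b - τ • (g b - g a))
    have h2 := hup b (b - τ • (g b - g a))
    rw [sub_sub_cancel_left, norm_neg, norm_smul, Real.norm_eq_abs, mul_pow, sq_abs] at h2
    simp only [inner_neg_right, inner_sub_left, inner_sub_right, real_inner_smul_right,
      real_inner_comm (g a) (g b), ← real_inner_self_eq_norm_sq] at h1 h2 ⊢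
    linarith
  have hquad : ∀ τ : ℝ, 0 ≤ L * ‖g b - g a‖ ^ 2 * (τ * τ) + (-2 * ‖g b - g a‖ ^ 2) * τ
      + ⟪g b - g a, b - a⟫ := by
    intro τ
    have hab := hgap a b τ
    have hba := hgap b a τ
    rw [norm_sub_rev] at hba
    simp only [inner_sub_right, real_inner_comm a, real_inner_comm b] at hab hba ⊢
    linarith
  have hc := hquad 0
  have hdisc := discrim_le_zero hquad
  simp only [discrim] at hdisc
  simp only [mul_zero, add_zero, zero_add] at hc
  nlinarith [mul_nonneg hL hc, sq_nonneg ‖g b - g a‖]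

theorem norm_sub_half_smul_sq (q s : E) (c : ℝ) :
    ‖q - (c / 2) • s‖ ^ 2 = ‖q‖ ^ 2 - c * ⟪q, s⟫ + (c / 2 * ‖s‖) ^ 2 := by
  rw [norm_sub_sq_real, real_inner_smul_right, norm_smul, Real.norm_eq_abs, mul_pow, mul_pow,
    sq_abs]
  ring

theorem norm_sub_half_smul_le_of_norm_sq_le {q s : E} {c : ℝ} (hc : 0 ≤ c)
    (h : ‖q‖ ^ 2 ≤ c * ⟪q, s⟫) : ‖q - (c / 2) • s‖ ≤ c / 2 * ‖s‖ := by
  rw [← sq_le_sq₀ (norm_nonneg _) (by positivity), norm_sub_half_smul_sq]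
  linarith

theorem norm_sq_le_of_norm_sub_half_smul_le {q s : E} {c : ℝ}
    (h : ‖q - (c / 2) • s‖ ≤ c / 2 * ‖s‖) : ‖q‖ ^ 2 ≤ c * ⟪q, s⟫ := by
  have h2 := pow_le_pow_left₀ (norm_nonneg _) h 2
  rw [norm_sub_half_smul_sq] at h2
  linarith

section Gradient

variable [CompleteSpace E] {φ : E → ℝ}

theorem DifferentiableAt.hasDerivAt_comp_add_smul {a v : E} {t : ℝ}
    (hφ : DifferentiableAt ℝ φ (a + t • v)) :
    HasDerivAt (fun τ : ℝ => φ (a + τ • v)) ⟪gradient φ (a + t • v), v⟫ t := by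
  have hline : HasDerivAt (fun τ : ℝ => a + τ • v) v t := by
    simpa using ((hasDerivAt_id t).smul_const v).const_add a
  have h := hφ.hasGradientAt.hasFDerivAt.comp_hasDerivAt t hline
  rw [InnerProductSpace.toDual_apply_apply] at h
  exact h

theorem Differentiable.hasDerivAt_sub_linear_sub_quadratic (hφ : Differentiable ℝ φ)
    (c : ℝ) (a v : E) (t : ℝ) :
    HasDerivAt (fun τ : ℝ => φ (a + τ • v) - τ * ⟪gradient φ a, v⟫ - c / 2 * τ ^ 2 * ‖v‖ ^ 2)
      (⟪gradient φ (a + t • v) - gradient φ a, v⟫ - c * t * ‖v‖ ^ 2) t := by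
  have hquad := ((hasDerivAt_pow 2 t).const_mul (c / 2)).mul_const (‖v‖ ^ 2)
  refine (((hφ _).hasDerivAt_comp_add_smul.sub ((hasDerivAt_id t).mul_const _)).sub
    hquad).congr_deriv ?_
  rw [inner_sub_left]
  ring

theorem add_inner_gradient_add_le_of_strongMonotone {m : ℝ} (hφ : Differentiable ℝ φ)
    (hmono : ∀ u v, m * ‖u - v‖ ^ 2 ≤ ⟪gradient φ u - gradient φ v, u - v⟫) (a b : E) :
    φ a + ⟪gradient φ a, b - a⟫ + m / 2 * ‖b - a‖ ^ 2 ≤ φ b := by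
  have hderiv := hφ.hasDerivAt_sub_linear_sub_quadratic m a (b - a)
  have hmon : MonotoneOn (fun τ : ℝ => φ (a + τ • (b - a)) - τ * ⟪gradient φ a, b - a⟫
      - m / 2 * τ ^ 2 * ‖b - a‖ ^ 2) (Set.Icc 0 1) := by
    refine monotoneOn_of_hasDerivWithinAt_nonneg (convex_Icc 0 1)
      (fun t _ => (hderiv t).continuousAt.continuousWithinAt)
      (fun t _ => (hderiv t).hasDerivWithinAt) fun t ht => ?_
    rw [interior_Icc] at ht
    have h := hmono (a + t • (b - a)) a
    rw [add_sub_cancel_left, norm_smul, Real.norm_eq_abs, abs_of_pos ht.1, inner_smul_right]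
      at h
    nlinarith [ht.1]
  have := hmon (by simp) (by simp) zero_le_one
  simp only [zero_smul, one_smul, add_zero, add_sub_cancel, zero_mul, one_mul, sub_zero, one_pow,
    zero_pow two_ne_zero] at this
  linarith

theorem le_add_inner_gradient_add_of_lipschitz {M : ℝ} (hφ : Differentiable ℝ φ)
    (hlip : ∀ u v, ‖gradient φ u - gradient φ v‖ ≤ M * ‖u - v‖) (a b : E) :
    φ b ≤ φ a + ⟪gradient φ a, b - a⟫ + M / 2 * ‖b - a‖ ^ 2 := by
  have hderiv := hφ.hasDerivAt_sub_linear_sub_quadratic M a (b - a)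
  have hanti : AntitoneOn (fun τ : ℝ => φ (a + τ • (b - a)) - τ * ⟪gradient φ a, b - a⟫
      - M / 2 * τ ^ 2 * ‖b - a‖ ^ 2) (Set.Icc 0 1) := by
    refine antitoneOn_of_hasDerivWithinAt_nonpos (convex_Icc 0 1)
      (fun t _ => (hderiv t).continuousAt.continuousWithinAt)
      (fun t _ => (hderiv t).hasDerivWithinAt) fun t ht => ?_
    rw [interior_Icc] at ht
    have h := hlip (a + t • (b - a)) a
    rw [add_sub_cancel_left, norm_smul, Real.norm_eq_abs, abs_of_pos ht.1] at h
    nlinarith [real_inner_le_norm (gradient φ (a + t • (b - a)) - gradient φ a) (b - a),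
      norm_nonneg (b - a)]
  have := hanti (by simp) (by simp) zero_le_one
  simp only [zero_smul, one_smul, add_zero, add_sub_cancel, zero_mul, one_mul, sub_zero, one_pow,
    zero_pow two_ne_zero] at this
  linarith

theorem norm_gradient_sub_sub_smul_sq_le {m M : ℝ} (hφ : Differentiable ℝ φ) (hmM : m ≤ M)
    (hmono : ∀ u v, m * ‖u - v‖ ^ 2 ≤ ⟪gradient φ u - gradient φ v, u - v⟫)
    (hlip : ∀ u v, ‖gradient φ u - gradient φ v‖ ≤ M * ‖u - v‖) (a b : E) :
    ‖gradient φ b - gradient φ a - m • (b - a)‖ ^ 2 ≤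
      (M - m) * ⟪gradient φ b - gradient φ a - m • (b - a), b - a⟫ := by
  have hsq : ∀ a b : E, ‖b‖ ^ 2 = ‖a‖ ^ 2 + 2 * ⟪a, b - a⟫ + ‖b - a‖ ^ 2 := fun a b => by
    rw [← norm_add_sq_real, add_sub_cancel]
  have h := norm_sub_sq_le_mul_inner_sub (f := fun x => φ x - m / 2 * ‖x‖ ^ 2)
    (g := fun x => gradient φ x - m • x) (sub_nonneg.2 hmM)
    (fun a b => by
      have := add_inner_gradient_add_le_of_strongMonotone hφ hmono a b
      simp only [inner_sub_left, real_inner_smul_left, hsq a b]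
      linarith)
    (fun a b => by
      have := le_add_inner_gradient_add_of_lipschitz hφ hlip a b
      simp only [inner_sub_left, real_inner_smul_left, hsq a b]
      linarith) a b
  have hg : gradient φ b - m • b - (gradient φ a - m • a)
      = gradient φ b - gradient φ a - m • (b - a) := by module
  rwa [hg] at h

end Gradient

end

theorem noisy_curvature_upper_bound_case1_general
    {d : ℕ} (φ : EuclideanSpace ℝ (Fin d) → ℝ) (hφ : Differentiable ℝ φ)
    (m M : ℝ) (hmM : m ≤ M)
    (hconv : ∀ u v : EuclideanSpace ℝ (Fin d),
      (inner ℝ (gradient φ u - gradient φ v) (u - v) : ℝ) ≥ m * ‖u - v‖ ^ 2)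
    (hlip : ∀ u v : EuclideanSpace ℝ (Fin d),
      ‖gradient φ u - gradient φ v‖ ≤ M * ‖u - v‖)
    (x s : EuclideanSpace ℝ (Fin d)) (hs : s ≠ 0)
    (εg : ℝ)
    (y : EuclideanSpace ℝ (Fin d))
    (hy : ‖y - (gradient φ (x + s) - gradient φ x)‖ ≤ 2 * εg)
    (hsy : (inner ℝ s y : ℝ) > 0)
    (hcase : 2 * εg < m * ‖s‖) :
    (inner ℝ y y : ℝ) / (inner ℝ s y : ℝ) ≤ M + 2 * εg / ‖s‖ := by
  set Δ := gradient φ (x + s) - gradient φ x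
  set t := 2 * εg / ‖s‖
  have hts : t * ‖s‖ = 2 * εg := div_mul_cancel₀ _ (norm_ne_zero_iff.2 hs)
  have htm : t ≤ m := le_of_lt <| (div_lt_iff₀ (norm_pos_iff.2 hs)).2 hcase
  have hΔ : ‖Δ - m • s - ((M - m) / 2) • s‖ ≤ (M - m) / 2 * ‖s‖ := by
    have h := norm_gradient_sub_sub_smul_sq_le hφ hmM hconv hlip x (x + s)
    rw [add_sub_cancel_left] at h
    exact norm_sub_half_smul_le_of_norm_sq_le (sub_nonneg.2 hmM) h
  have hy' : ‖y - ((M + t) / 2) • s‖ ≤ (M + t) / 2 * ‖s‖ :=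
    calc ‖y - ((M + t) / 2) • s‖
        = ‖(y - Δ) + (Δ - m • s - ((M - m) / 2) • s) + ((m - t) / 2) • s‖ := by
          congr 1; module
      _ ≤ ‖y - Δ‖ + ‖Δ - m • s - ((M - m) / 2) • s‖ + ‖((m - t) / 2) • s‖ := norm_add₃_le
      _ ≤ t * ‖s‖ + (M - m) / 2 * ‖s‖ + (m - t) / 2 * ‖s‖ := by
          rw [norm_smul_of_nonneg (by linarith), hts]
          gcongr
      _ = (M + t) / 2 * ‖s‖ := by ring
  have h := norm_sq_le_of_norm_sub_half_smul_le hy'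
  rw [div_le_iff₀ hsy, real_inner_self_eq_norm_sq, real_inner_comm]
  exact h

/-- Case 1 in the proof of Lemma 3.1: if `2 ε_g < m ‖s‖`, then
`⟨y, y⟩ / ⟨s, y⟩ ≤ M + 2 ε_g / ‖s‖`. -/
theorem noisy_curvature_upper_bound_case1
    {d : ℕ} (φ : EuclideanSpace ℝ (Fin d) → ℝ) (hφ : Differentiable ℝ φ)
    (m M : ℝ) (hm : 0 < m) (hmM : m ≤ M)
    (hconv : ∀ u v : EuclideanSpace ℝ (Fin d),
      (inner ℝ (gradient φ u - gradient φ v) (u - v) : ℝ) ≥ m * ‖u - v‖ ^ 2)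
    (hlip : ∀ u v : EuclideanSpace ℝ (Fin d),
      ‖gradient φ u - gradient φ v‖ ≤ M * ‖u - v‖)
    (x s : EuclideanSpace ℝ (Fin d)) (hs : s ≠ 0)
    (εg : ℝ) (hεg : 0 ≤ εg)
    (y : EuclideanSpace ℝ (Fin d))
    (hy : ‖y - (gradient φ (x + s) - gradient φ x)‖ ≤ 2 * εg)
    (hsy : (inner ℝ s y : ℝ) > 0)
    (hcase : 2 * εg < m * ‖s‖) :
    (inner ℝ y y : ℝ) / (inner ℝ s y : ℝ) ≤ M + 2 * εg / ‖s‖ :=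
  noisy_curvature_upper_bound_case1_general φ hφ m M hmM hconv hlip x s hs εg y hy hsy hcase
end

section
/- (Lemma 3.1) Let φ : ℝ^d → ℝ be differentiable and satisfy, for constants 0 < m ≤ M and all u, v ∈ ℝ^d: ⟨∇φ(u) − ∇φ(v), u − v⟩ ≥ m ‖u − v‖² and ‖∇φ(u) − ∇φ(v)‖ ≤ M ‖u − v‖. Let g : ℝ^d → ℝ^d satisfy ‖g(x) − ∇φ(x)‖ ≤ ε_g for all x, with ε_g > 0. Fix x ∈ ℝ^d and s ∈ ℝ^d with s ≠ 0, let y = g(x + s) − g(x), and suppose ⟨s, y⟩ ≥ c ε_g ‖s‖ with c > 2. Then ⟨s, y⟩ / ⟨s, s⟩ ≥ (c/(c+2)) m and ⟨y, y⟩ / ⟨s, y⟩ ≤ (c/(c−2)) M. -/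
/-!
Write `z = ∇φ(x + s) - ∇φ x`. The oracle error gives `‖y - z‖ ≤ 2ε`, and the noise control
condition `c ε ‖s‖ ≤ ⟪s, y⟫` absorbs that error into `⟪s, y⟫` itself. The lower bound then only
needs strong monotonicity `m ‖s‖² ≤ ⟪z, s⟫`. The upper bound rests on Baillon–Haddad
co-coercivity `‖z‖² ≤ M ⟪z, s⟫` (from the first-order convexity and descent inequalities): it puts
`z` in the ball of radius `M ‖s‖ / 2` about `(M / 2) • s`, hence `y` in the ball of radius
`M ‖s‖ / 2 + 2ε`, and `c ε ≤ ‖y‖ ≤ M ‖s‖ + 2ε` controls the resulting error terms.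
-/

open Set
open scoped Gradient RealInnerProductSpace

section Smooth

variable {F : Type*} [NormedAddCommGroup F] [InnerProductSpace ℝ F] [CompleteSpace F]
  {φ : F → ℝ}

theorem Differentiable.hasDerivAt_comp_add_smul (hφ : Differentiable ℝ φ) (u w : F) (t : ℝ) :
    HasDerivAt (fun t : ℝ => φ (u + t • w)) ⟪∇ φ (u + t • w), w⟫ t := by
  have hline : HasDerivAt (fun t : ℝ => u + t • w) w t := by
    simpa using ((hasDerivAt_id t).smul_const w).const_add u
  exact ((hφ _).hasGradientAt.hasFDerivAt.comp_hasDerivAt t hline).congr_deriv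
    (InnerProductSpace.toDual_apply_apply ..)

theorem add_inner_gradient_le_of_monotone (hφ : Differentiable ℝ φ)
    (hmono : ∀ u v, 0 ≤ ⟪∇ φ u - ∇ φ v, u - v⟫) (u v : F) :
    φ u + ⟪∇ φ u, v - u⟫ ≤ φ v := by
  set w := v - u
  have hderiv := hφ.hasDerivAt_comp_add_smul u w
  have hslope : ∀ t ∈ Ico (0 : ℝ) 1, ⟪∇ φ u, w⟫ ≤ ⟪∇ φ (u + t • w), w⟫ := by
    rintro t ⟨ht0, -⟩
    rcases ht0.eq_or_lt with rfl | htpos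
    · simp
    have h := hmono (u + t • w) u
    rw [add_sub_cancel_left, real_inner_smul_right, inner_sub_left] at h
    nlinarith
  have hline := image_le_of_deriv_right_le_deriv_boundary (a := 0) (b := 1)
    (f := fun t => φ u + t * ⟪∇ φ u, w⟫) (B := fun t => φ (u + t • w))
    (by fun_prop) (fun t _ => ((hasDerivAt_mul_const _).const_add _).hasDerivWithinAt)
    (by simp) (fun t _ => (hderiv t).continuousAt.continuousWithinAt)
    (fun t _ => (hderiv t).hasDerivWithinAt) hslope (right_mem_Icc.2 zero_le_one)
  simpa [w] using hline

theorem le_add_inner_gradient_add_sq_of_lipschitz (hφ : Differentiable ℝ φ) {M : ℝ}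
    (hlip : ∀ u v, ‖∇ φ u - ∇ φ v‖ ≤ M * ‖u - v‖) (u v : F) :
    φ v ≤ φ u + ⟪∇ φ u, v - u⟫ + M / 2 * ‖v - u‖ ^ 2 := by
  set w := v - u
  have hderiv := hφ.hasDerivAt_comp_add_smul u w
  have hbound : ∀ t : ℝ, HasDerivAt (fun t : ℝ => φ u + t * ⟪∇ φ u, w⟫ + M / 2 * ‖w‖ ^ 2 * t ^ 2)
      (⟪∇ φ u, w⟫ + M * ‖w‖ ^ 2 * t) t := fun t =>
    (((hasDerivAt_mul_const _).const_add _).add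
      ((hasDerivAt_pow 2 t).const_mul (M / 2 * ‖w‖ ^ 2))).congr_deriv (by ring)
  have hslope : ∀ t ∈ Ico (0 : ℝ) 1,
      ⟪∇ φ (u + t • w), w⟫ ≤ ⟪∇ φ u, w⟫ + M * ‖w‖ ^ 2 * t := by
    rintro t ⟨ht0, -⟩
    have h := hlip (u + t • w) u
    rw [add_sub_cancel_left, norm_smul, Real.norm_of_nonneg ht0] at h
    calc ⟪∇ φ (u + t • w), w⟫
        = ⟪∇ φ u, w⟫ + ⟪∇ φ (u + t • w) - ∇ φ u, w⟫ := by rw [inner_sub_left]; ring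
      _ ≤ ⟪∇ φ u, w⟫ + ‖∇ φ (u + t • w) - ∇ φ u‖ * ‖w‖ := by
          gcongr; exact real_inner_le_norm _ _
      _ ≤ ⟪∇ φ u, w⟫ + M * (t * ‖w‖) * ‖w‖ := by gcongr
      _ = ⟪∇ φ u, w⟫ + M * ‖w‖ ^ 2 * t := by ring
  have hline := image_le_of_deriv_right_le_deriv_boundary (a := 0) (b := 1)
    (fun t _ => (hderiv t).continuousAt.continuousWithinAt)
    (fun t _ => (hderiv t).hasDerivWithinAt) (by simp)
    (fun t _ => (hbound t).continuousAt.continuousWithinAt)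
    (fun t _ => (hbound t).hasDerivWithinAt)
    hslope (right_mem_Icc.2 zero_le_one)
  simpa [w] using hline

theorem add_inner_gradient_add_sq_norm_gradient_sub_le (hφ : Differentiable ℝ φ)
    (hmono : ∀ u v, 0 ≤ ⟪∇ φ u - ∇ φ v, u - v⟫) {M : ℝ} (hM : 0 < M)
    (hlip : ∀ u v, ‖∇ φ u - ∇ φ v‖ ≤ M * ‖u - v‖) (u v : F) :
    φ u + ⟪∇ φ u, v - u⟫ + ‖∇ φ v - ∇ φ u‖ ^ 2 / (2 * M) ≤ φ v := by
  set δ := ∇ φ v - ∇ φ u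
  -- the convexity bound from `u` and the descent bound from `v` meet at the gradient step `z`
  set z := v - M⁻¹ • δ
  have hlower := add_inner_gradient_le_of_monotone hφ hmono u z
  have hupper := le_add_inner_gradient_add_sq_of_lipschitz hφ hlip v z
  have hzu : z - u = (v - u) - M⁻¹ • δ := by simp only [z]; abel
  have hzv : z - v = -(M⁻¹ • δ) := by simp only [z]; abel
  rw [hzu, inner_sub_right, real_inner_smul_right] at hlower
  rw [hzv, inner_neg_right, real_inner_smul_right, norm_neg, norm_smul, Real.norm_of_nonneg
    (inv_nonneg.2 hM.le)] at hupper
  have hδ : M⁻¹ * ⟪∇ φ v, δ⟫ - M⁻¹ * ⟪∇ φ u, δ⟫ = M⁻¹ * ‖δ‖ ^ 2 := by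
    rw [← mul_sub, ← inner_sub_left, real_inner_self_eq_norm_sq]
  have hquad : M / 2 * (M⁻¹ * ‖δ‖) ^ 2 = M⁻¹ * ‖δ‖ ^ 2 - ‖δ‖ ^ 2 / (2 * M) := by
    field_simp; ring
  linarith

theorem sq_norm_gradient_sub_le_mul_inner (hφ : Differentiable ℝ φ)
    (hmono : ∀ u v, 0 ≤ ⟪∇ φ u - ∇ φ v, u - v⟫) {M : ℝ} (hM : 0 < M)
    (hlip : ∀ u v, ‖∇ φ u - ∇ φ v‖ ≤ M * ‖u - v‖) (u v : F) :
    ‖∇ φ u - ∇ φ v‖ ^ 2 ≤ M * ⟪∇ φ u - ∇ φ v, u - v⟫ := by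
  have huv := add_inner_gradient_add_sq_norm_gradient_sub_le hφ hmono hM hlip u v
  have hvu := add_inner_gradient_add_sq_norm_gradient_sub_le hφ hmono hM hlip v u
  rw [norm_sub_rev] at huv
  have hsum : ⟪∇ φ u, v - u⟫ + ⟪∇ φ v, u - v⟫ = -⟪∇ φ u - ∇ φ v, u - v⟫ := by
    rw [← neg_sub u v, inner_neg_right, inner_sub_left]; ring
  have hdiv : ‖∇ φ u - ∇ φ v‖ ^ 2 / M ≤ ⟪∇ φ u - ∇ φ v, u - v⟫ := by
    have : ‖∇ φ u - ∇ φ v‖ ^ 2 / (2 * M) + ‖∇ φ u - ∇ φ v‖ ^ 2 / (2 * M)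
        = ‖∇ φ u - ∇ φ v‖ ^ 2 / M := by field_simp; ring
    linarith
  rwa [div_le_iff₀' hM] at hdiv

end Smooth

section NoisyPair

variable {F : Type*} [NormedAddCommGroup F] [InnerProductSpace ℝ F] {s y z : F} {c ε : ℝ}

theorem norm_sub_half_smul_le_of_sq_norm_le_mul_inner {M : ℝ} (hM : 0 ≤ M)
    (hz : ‖z‖ ^ 2 ≤ M * ⟪z, s⟫) : ‖z - (M / 2) • s‖ ≤ M / 2 * ‖s‖ := by
  refine le_of_pow_le_pow_left₀ two_ne_zero (by positivity) ?_
  rw [norm_sub_sq_real, real_inner_smul_right, norm_smul, Real.norm_of_nonneg (by positivity)]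
  nlinarith

theorem le_inner_div_inner_self_of_norm_sub_le {m : ℝ} (hs : s ≠ 0) (hc : 0 < c)
    (hz : m * ‖s‖ ^ 2 ≤ ⟪z, s⟫) (hyz : ‖y - z‖ ≤ 2 * ε) (hsy : c * ε * ‖s‖ ≤ ⟪s, y⟫) :
    c / (c + 2) * m ≤ ⟪s, y⟫ / ⟪s, s⟫ := by
  have hnoise : |⟪s, y - z⟫| ≤ ‖s‖ * (2 * ε) :=
    (abs_real_inner_le_norm s _).trans (mul_le_mul_of_nonneg_left hyz (norm_nonneg s))
  have hsplit : ⟪s, y⟫ = ⟪z, s⟫ + ⟪s, y - z⟫ := by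
    rw [inner_sub_right, real_inner_comm s z]; ring
  have hs2 : 0 < ‖s‖ ^ 2 := by positivity
  rw [real_inner_self_eq_norm_sq, le_div_iff₀ hs2, div_mul_eq_mul_div, div_mul_eq_mul_div,
    div_le_iff₀ (by positivity)]
  nlinarith [abs_le.1 hnoise]

theorem inner_self_div_inner_le_of_norm_sub_le {M : ℝ} (hs : s ≠ 0) (hc : 2 < c) (hε : 0 < ε)
    (hM : 0 ≤ M) (hz : ‖z‖ ^ 2 ≤ M * ⟪z, s⟫) (hyz : ‖y - z‖ ≤ 2 * ε)
    (hsy : c * ε * ‖s‖ ≤ ⟪s, y⟫) :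
    ⟪y, y⟫ / ⟪s, y⟫ ≤ c / (c - 2) * M := by
  have hsy_pos : 0 < ⟪s, y⟫ := lt_of_lt_of_le (by positivity) hsy
  -- co-coercivity puts `z` in the ball of radius `M‖s‖/2` around `(M/2) • s`; `y` is `2ε` off
  have hball : ‖y - (M / 2) • s‖ ≤ M / 2 * ‖s‖ + 2 * ε :=
    calc ‖y - (M / 2) • s‖ = ‖(z - (M / 2) • s) + (y - z)‖ := by congr 1; abel
      _ ≤ M / 2 * ‖s‖ + 2 * ε :=
        (norm_add_le _ _).trans (add_le_add
          (norm_sub_half_smul_le_of_sq_norm_le_mul_inner hM hz) hyz)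
  have hquad : ‖y‖ ^ 2 - M * ⟪s, y⟫ ≤ 2 * ε * (M * ‖s‖) + 4 * ε ^ 2 := by
    have hsq := pow_le_pow_left₀ (norm_nonneg _) hball 2
    rw [norm_sub_sq_real, real_inner_smul_right, norm_smul,
      Real.norm_of_nonneg (by positivity), real_inner_comm] at hsq
    nlinarith
  have hy_le : ‖y‖ ≤ M * ‖s‖ + 2 * ε :=
    calc ‖y‖ = ‖(y - (M / 2) • s) + (M / 2) • s‖ := by rw [sub_add_cancel]
      _ ≤ M / 2 * ‖s‖ + 2 * ε + M / 2 * ‖s‖ := by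
        refine (norm_add_le _ _).trans (add_le_add hball ?_)
        rw [norm_smul, Real.norm_of_nonneg (by positivity)]
      _ = M * ‖s‖ + 2 * ε := by ring
  have hy_ge : c * ε ≤ ‖y‖ :=
    le_of_mul_le_mul_right (hsy.trans (real_inner_le_norm s y) |>.trans_eq (mul_comm _ _))
      (norm_pos_iff.2 hs)
  have hε_le : 2 * ε * ((c - 2) * ε) ≤ 2 * ε * (M * ‖s‖) :=
    mul_le_mul_of_nonneg_left (by linarith) (by positivity)
  rw [real_inner_self_eq_norm_sq, div_le_iff₀ hsy_pos, div_mul_eq_mul_div, div_mul_eq_mul_div,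
    le_div_iff₀ (by linarith)]
  nlinarith [mul_le_mul_of_nonneg_left hsy hM]

end NoisyPair

/-- Lemma 3.1: under the noise control condition with constant `c > 2`, the curvature
pair `(s, y)` satisfies `⟨s, y⟩/⟨s, s⟩ ≥ (c/(c+2)) m` and `⟨y, y⟩/⟨s, y⟩ ≤ (c/(c−2)) M`. -/
theorem lemma_3_1
    {d : ℕ} (φ : EuclideanSpace ℝ (Fin d) → ℝ) (hφ : Differentiable ℝ φ)
    (m M : ℝ) (hm : 0 < m) (hmM : m ≤ M)
    (hconv : ∀ u v : EuclideanSpace ℝ (Fin d),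
      (inner ℝ (gradient φ u - gradient φ v) (u - v) : ℝ) ≥ m * ‖u - v‖ ^ 2)
    (hlip : ∀ u v : EuclideanSpace ℝ (Fin d),
      ‖gradient φ u - gradient φ v‖ ≤ M * ‖u - v‖)
    (g : EuclideanSpace ℝ (Fin d) → EuclideanSpace ℝ (Fin d))
    (εg : ℝ) (hεg : 0 < εg)
    (hg : ∀ x, ‖g x - gradient φ x‖ ≤ εg)
    (x s : EuclideanSpace ℝ (Fin d)) (hs : s ≠ 0)
    (y : EuclideanSpace ℝ (Fin d)) (hy : y = g (x + s) - g x)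
    (c : ℝ) (hc : 2 < c)
    (hnc : (inner ℝ s y : ℝ) ≥ c * εg * ‖s‖) :
    (inner ℝ s y : ℝ) / (inner ℝ s s : ℝ) ≥ (c / (c + 2)) * m ∧
      (inner ℝ y y : ℝ) / (inner ℝ s y : ℝ) ≤ (c / (c - 2)) * M := by
  have hM : 0 < M := hm.trans_le hmM
  have hmono : ∀ u v, 0 ≤ ⟪∇ φ u - ∇ φ v, u - v⟫ := fun u v =>
    (by positivity : 0 ≤ m * ‖u - v‖ ^ 2).trans (hconv u v)
  set z := ∇ φ (x + s) - ∇ φ x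
  have hyz : ‖y - z‖ ≤ 2 * εg :=
    calc ‖y - z‖ = ‖(g (x + s) - ∇ φ (x + s)) - (g x - ∇ φ x)‖ := by
          rw [hy]; simp only [z]; congr 1; abel
      _ ≤ εg + εg := (norm_sub_le _ _).trans (add_le_add (hg _) (hg _))
      _ = 2 * εg := by ring
  have hstrong := hconv (x + s) x
  have hcoco := sq_norm_gradient_sub_le_mul_inner hφ hmono hM hlip (x + s) x
  rw [add_sub_cancel_left] at hstrong hcoco
  exact ⟨le_inner_div_inner_self_of_norm_sub_le hs (by linarith) hstrong hyz hnc,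
    inner_self_div_inner_le_of_norm_sub_le hs hc hεg hM.le hcoco hyz hnc⟩
end

section
/- Let B be a real symmetric positive definite d × d matrix and define ψ(B) = tr(B) − log det(B). Then the condition number κ(B) = λ_max(B)/λ_min(B) satisfies κ(B) ≤ exp(ψ(B)), where λ_max(B) and λ_min(B) are the largest and smallest eigenvalues of B. -/
/-!
In the eigenvalues `λᵢ > 0` of `B`, `ψ(B) = ∑ᵢ (λᵢ - log λᵢ)`, and every summand is
nonnegative. Keeping only the summands of `λ_max` and `λ_min`, it suffices that
`log λ_max - log λ_min ≤ (λ_max - log λ_max) + (λ_min - log λ_min)`, i.e.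
`2 log λ_max ≤ λ_max + λ_min`, which follows from `2 log x ≤ x`.
-/

open Real Finset

lemma Real.two_mul_log_le_self {x : ℝ} (hx : 0 < x) : 2 * log x ≤ x := by
  -- `log x = 2 log √x ≤ 2 (√x - 1) ≤ x / 2`
  have h := log_le_sub_one_of_pos (sqrt_pos.mpr hx)
  rw [log_sqrt hx.le] at h
  nlinarith [sq_sqrt hx.le, sq_nonneg (sqrt x - 2)]

lemma Real.log_sub_log_le_add_sub_log {a b : ℝ} (ha : 0 < a) (hb : 0 < b) :
    log a - log b ≤ (a - log a) + (b - log b) := by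
  linarith [two_mul_log_le_self ha]

lemma Real.div_le_exp_sum_sub_log {ι : Type*} [Fintype ι] {f : ι → ℝ} (hf : ∀ i, 0 < f i)
    (i j : ι) : f i / f j ≤ exp (∑ k, (f k - log (f k))) := by
  have hterm_nonneg : ∀ k, 0 ≤ f k - log (f k) := fun k =>
    sub_nonneg.mpr (log_le_self (hf k).le)
  rw [← exp_log (div_pos (hf i) (hf j)), log_div (hf i).ne' (hf j).ne']
  gcongr
  rcases eq_or_ne i j with rfl | hij
  · simpa using sum_nonneg fun k _ => hterm_nonneg k
  · calc log (f i) - log (f j) ≤ (f i - log (f i)) + (f j - log (f j)) :=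
          log_sub_log_le_add_sub_log (hf i) (hf j)
      _ ≤ ∑ k, (f k - log (f k)) :=
          add_le_sum (fun k _ => hterm_nonneg k) (mem_univ i) (mem_univ j) hij

lemma Real.iSup_div_iInf_le_exp_sum_sub_log {ι : Type*} [Fintype ι] [Nonempty ι] {f : ι → ℝ}
    (hf : ∀ i, 0 < f i) : (⨆ i, f i) / (⨅ i, f i) ≤ exp (∑ k, (f k - log (f k))) := by
  obtain ⟨i, hi⟩ := exists_eq_ciSup_of_finite (f := f)
  obtain ⟨j, hj⟩ := exists_eq_ciInf_of_finite (f := f)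
  rw [← hi, ← hj]
  exact div_le_exp_sum_sub_log hf i j

lemma Matrix.PosDef.trace_sub_log_det_eq_sum {n : Type*} [Fintype n] [DecidableEq n]
    {B : Matrix n n ℝ} (hB : B.PosDef) :
    B.trace - log B.det = ∑ i, (hB.1.eigenvalues i - log (hB.1.eigenvalues i)) := by
  have hdet : B.det = ∏ i, hB.1.eigenvalues i := by
    simpa using hB.1.det_eq_prod_eigenvalues
  rw [sum_sub_distrib, hdet, log_prod fun i _ => (hB.eigenvalues_pos i).ne']
  simp [hB.1.trace_eq_sum_eigenvalues]

/-- For a symmetric positive definite matrix `B`, the condition number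
`κ(B) = λ_max(B)/λ_min(B)` is at most `exp(ψ(B))` where `ψ(B) = tr(B) − log det(B)`. -/
theorem condition_number_le_exp_psi
    {d : ℕ} (hd : 0 < d) (B : Matrix (Fin d) (Fin d) ℝ) (hB : B.PosDef) :
    (⨆ i, hB.1.eigenvalues i) / (⨅ i, hB.1.eigenvalues i) ≤
      Real.exp (B.trace - Real.log B.det) := by
  have : Nonempty (Fin d) := ⟨⟨0, hd⟩⟩
  rw [hB.trace_sub_log_det_eq_sum]
  exact iSup_div_iInf_le_exp_sum_sub_log hB.eigenvalues_pos
end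

section
/- Let B be a real symmetric positive definite d × d matrix, let s, y ∈ ℝ^d with s ≠ 0 and ⟨s, y⟩ > 0, and suppose ⟨s, y⟩/⟨s, s⟩ ≥ m̂ and ⟨y, y⟩/⟨s, y⟩ ≤ M̂ for constants 0 < m̂ ≤ M̂. Define the BFGS update B⁺ = B − (B s)(B s)ᵀ/⟨s, B s⟩ + y yᵀ/⟨s, y⟩ and ψ(A) = tr(A) − log det(A). Then B⁺ is symmetric positive definite and ψ(B⁺) ≤ ψ(B) + (M̂ − log m̂). -/
/-!
Removing the curvature of `B` along `s` leaves the quadratic form `x ↦ ⟨z, B z⟩` of the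
`B`-orthogonal projection `z` of `x` away from `s`, and the new term adds `⟨x, y⟩² / ⟨s, y⟩`,
which is positive on the nonzero multiples of `s`, where `z` vanishes; so `B⁺` is positive definite. The trace drops by
`|Bs|² / ⟨s, Bs⟩` and gains `|y|² / ⟨s, y⟩ ≤ M̂`, while the rank-two matrix determinant lemma gives
`det B⁺ = det B · ⟨s, y⟩ / ⟨s, Bs⟩`. Writing `t = ⟨s, Bs⟩ / ⟨s, s⟩`, Cauchy–Schwarz gives
`|Bs|² / ⟨s, Bs⟩ ≥ t`, and `log ⟨s, Bs⟩ - log ⟨s, y⟩ = log t - log (⟨s, y⟩ / ⟨s, s⟩)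
≤ t - 1 - log m̂`, so the potential grows by at most `M̂ - log m̂`.
-/

open Matrix

namespace Matrix

variable {n R : Type*}

theorem isSymm_vecMulVec_self [CommMagma R] (v : n → R) : (vecMulVec v v).IsSymm :=
  transpose_vecMulVec v v

variable [Fintype n]

theorem left_ne_zero_of_dotProduct [NonUnitalNonAssocSemiring R] {u v : n → R}
    (h : u ⬝ᵥ v ≠ 0) : u ≠ 0 := by
  rintro rfl
  simp at h

theorem IsSymm.dotProduct_mulVec_comm [CommSemiring R] {B : Matrix n n R} (hB : B.IsSymm)
    (v w : n → R) : v ⬝ᵥ B *ᵥ w = w ⬝ᵥ B *ᵥ v := by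
  conv_lhs => rw [dotProduct_mulVec, ← hB.eq, vecMul_transpose]
  exact dotProduct_comm _ _

section Ordered

variable [Field R] [LinearOrder R] [IsStrictOrderedRing R]

theorem dotProduct_self_pos_of_dotProduct_pos {u v : n → R} (h : 0 < u ⬝ᵥ v) :
    0 < u ⬝ᵥ u :=
  lt_of_le_of_ne (Finset.sum_nonneg fun i _ => mul_self_nonneg (u i))
    (Ne.symm <| dotProduct_self_eq_zero.not.mpr (left_ne_zero_of_dotProduct h.ne'))

theorem sq_dotProduct_le (u v : n → R) : (u ⬝ᵥ v) ^ 2 ≤ (u ⬝ᵥ u) * (v ⬝ᵥ v) := by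
  simpa only [dotProduct, sq] using Finset.sum_mul_sq_le_sq_mul_sq Finset.univ u v

theorem div_dotProduct_self_le_of_pos {u v : n → R} (h : 0 < u ⬝ᵥ v) :
    u ⬝ᵥ v / (u ⬝ᵥ u) ≤ v ⬝ᵥ v / (u ⬝ᵥ v) := by
  rw [div_le_div_iff₀ (dotProduct_self_pos_of_dotProduct_pos h) h, ← sq, mul_comm]
  exact sq_dotProduct_le u v

end Ordered

theorem det_add_vecMulVec_add_vecMulVec [CommRing R] [DecidableEq n] {A : Matrix n n R}
    (hA : IsUnit A.det) (a b c e : n → R) :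
    (A + vecMulVec a b + vecMulVec c e).det =
      A.det * ((1 + b ⬝ᵥ A⁻¹ *ᵥ a) * (1 + e ⬝ᵥ A⁻¹ *ᵥ c) -
        (b ⬝ᵥ A⁻¹ *ᵥ c) * (e ⬝ᵥ A⁻¹ *ᵥ a)) := by
  have hUV : vecMulVec a b + vecMulVec c e = (of ![a, c])ᵀ * of ![b, e] := by
    ext i j
    simp [mul_apply, Fin.sum_univ_two, vecMulVec_apply]
  have hVU : ∀ i j,
      (of ![b, e] * A⁻¹ * (of ![a, c])ᵀ) i j = ![b, e] i ⬝ᵥ A⁻¹ *ᵥ ![a, c] j := by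
    intro i j
    rw [Matrix.mul_assoc]
    simp only [mul_apply, transpose_apply, of_apply, dotProduct, mulVec]
  rw [add_assoc, hUV, det_add_mul _ _ hA, det_fin_two]
  simp only [add_apply, hVU]
  simp

end Matrix

noncomputable def bfgsUpdate {n : Type*} [Fintype n] (B : Matrix n n ℝ) (s y : n → ℝ) :
    Matrix n n ℝ :=
  B - (s ⬝ᵥ B *ᵥ s)⁻¹ • vecMulVec (B *ᵥ s) (B *ᵥ s) + (s ⬝ᵥ y)⁻¹ • vecMulVec y y

section bfgsUpdate

variable {n : Type*} [Fintype n] {B : Matrix n n ℝ} {s y : n → ℝ}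

theorem isSymm_bfgsUpdate (hB : B.IsSymm) : (bfgsUpdate B s y).IsSymm :=
  (hB.sub ((isSymm_vecMulVec_self _).smul _)).add ((isSymm_vecMulVec_self _).smul _)

theorem dotProduct_bfgsUpdate_mulVec (hB : B.IsSymm) (hs : s ⬝ᵥ B *ᵥ s ≠ 0) (x : n → ℝ) :
    x ⬝ᵥ bfgsUpdate B s y *ᵥ x =
      (x - (x ⬝ᵥ B *ᵥ s / s ⬝ᵥ B *ᵥ s) • s) ⬝ᵥ B *ᵥ (x - (x ⬝ᵥ B *ᵥ s / s ⬝ᵥ B *ᵥ s) • s) +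
        (x ⬝ᵥ y) ^ 2 / (s ⬝ᵥ y) := by
  simp only [bfgsUpdate, add_mulVec, sub_mulVec, smul_mulVec, vecMulVec_mulVec, mulVec_sub,
    mulVec_smul, dotProduct_add, dotProduct_sub, sub_dotProduct, dotProduct_smul, smul_dotProduct,
    smul_eq_mul, op_smul_eq_smul, hB.dotProduct_mulVec_comm s x]
  rw [dotProduct_comm x (B *ᵥ s), dotProduct_comm x y, dotProduct_mulVec x]
  field_simp
  ring

theorem posDef_bfgsUpdate (hB : B.PosDef) (hsy : 0 < s ⬝ᵥ y) : (bfgsUpdate B s y).PosDef := by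
  have hBsymm : B.IsSymm := isHermitian_iff_isSymm.mp hB.1
  have hsBs : 0 < s ⬝ᵥ B *ᵥ s := by
    simpa using hB.dotProduct_mulVec_pos (left_ne_zero_of_dotProduct hsy.ne')
  refine .of_dotProduct_mulVec_pos (isHermitian_iff_isSymm.mpr (isSymm_bfgsUpdate hBsymm))
    fun x hx => ?_
  rw [star_trivial, dotProduct_bfgsUpdate_mulVec hBsymm hsBs.ne']
  set z := x - (x ⬝ᵥ B *ᵥ s / s ⬝ᵥ B *ᵥ s) • s
  rcases eq_or_ne z 0 with hz | hz
  · obtain ⟨c, rfl⟩ : ∃ c : ℝ, x = c • s := ⟨_, sub_eq_zero.mp hz⟩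
    have hc : c ≠ 0 := by
      rintro rfl
      simp at hx
    rw [hz, zero_dotProduct, zero_add, smul_dotProduct, smul_eq_mul]
    positivity
  · have hzBz := hB.dotProduct_mulVec_pos hz
    rw [star_trivial] at hzBz
    positivity

theorem trace_bfgsUpdate :
    (bfgsUpdate B s y).trace =
      B.trace - (B *ᵥ s ⬝ᵥ B *ᵥ s) / (s ⬝ᵥ B *ᵥ s) + y ⬝ᵥ y / (s ⬝ᵥ y) := by
  simp only [bfgsUpdate, trace_add, trace_sub, trace_smul, trace_vecMulVec, smul_eq_mul]
  ring

theorem det_bfgsUpdate [DecidableEq n] (hB : B.IsSymm) (hdet : IsUnit B.det)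
    (hs : s ⬝ᵥ B *ᵥ s ≠ 0) :
    (bfgsUpdate B s y).det = B.det * (s ⬝ᵥ y / s ⬝ᵥ B *ᵥ s) := by
  have hBinv : B⁻¹ *ᵥ (B *ᵥ s) = s := by
    rw [mulVec_mulVec, nonsing_inv_mul _ hdet, one_mulVec]
  have hcross : B *ᵥ s ⬝ᵥ B⁻¹ *ᵥ y = s ⬝ᵥ y := by
    rw [dotProduct_comm, hB.dotProduct_mulVec_comm, mulVec_mulVec, mul_nonsing_inv _ hdet,
      one_mulVec]
  rw [bfgsUpdate, sub_eq_add_neg, ← neg_smul, ← smul_vecMulVec, ← smul_vecMulVec,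
    det_add_vecMulVec_add_vecMulVec hdet]
  simp only [mulVec_smul, dotProduct_smul, hBinv, hcross, dotProduct_comm (B *ᵥ s) s,
    dotProduct_comm y s, smul_eq_mul]
  rcases eq_or_ne (s ⬝ᵥ y) 0 with hsy | hsy
  · simp [hsy, hs]
  · field_simp
    ring

end bfgsUpdate

theorem bfgs_update_psi_bound_general
    {d : ℕ} (B : Matrix (Fin d) (Fin d) ℝ) (hB : B.PosDef)
    (s y : Fin d → ℝ) (hsy : 0 < s ⬝ᵥ y)
    (mhat Mhat : ℝ) (hm : 0 < mhat)
    (hlow : s ⬝ᵥ y / (s ⬝ᵥ s) ≥ mhat) (hup : y ⬝ᵥ y / (s ⬝ᵥ y) ≤ Mhat)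
    (Bplus : Matrix (Fin d) (Fin d) ℝ)
    (hBplus : Bplus =
      B - (s ⬝ᵥ B.mulVec s)⁻¹ • vecMulVec (B.mulVec s) (B.mulVec s) +
        (s ⬝ᵥ y)⁻¹ • vecMulVec y y) :
    Bplus.PosDef ∧
      Bplus.trace - Real.log Bplus.det ≤
        (B.trace - Real.log B.det) + (Mhat - Real.log mhat) := by
  rw [← bfgsUpdate] at hBplus
  subst hBplus
  have hss : 0 < s ⬝ᵥ s := dotProduct_self_pos_of_dotProduct_pos hsy
  have hsBs : 0 < s ⬝ᵥ B *ᵥ s := by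
    simpa using hB.dotProduct_mulVec_pos (left_ne_zero_of_dotProduct hsy.ne')
  refine ⟨posDef_bfgsUpdate hB hsy, ?_⟩
  rw [trace_bfgsUpdate, det_bfgsUpdate (isHermitian_iff_isSymm.mp hB.1) hB.det_pos.ne'.isUnit
    hsBs.ne', Real.log_mul hB.det_pos.ne' (by positivity)]
  have hCS : s ⬝ᵥ B *ᵥ s / (s ⬝ᵥ s) ≤ (B *ᵥ s ⬝ᵥ B *ᵥ s) / (s ⬝ᵥ B *ᵥ s) :=
    div_dotProduct_self_le_of_pos hsBs
  have hlog_ratio : Real.log (s ⬝ᵥ y / s ⬝ᵥ B *ᵥ s) =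
      Real.log (s ⬝ᵥ y / s ⬝ᵥ s) - Real.log (s ⬝ᵥ B *ᵥ s / s ⬝ᵥ s) := by
    rw [← Real.log_div (by positivity) (by positivity), div_div_div_cancel_right₀ hss.ne']
  have hlog_low : Real.log mhat ≤ Real.log (s ⬝ᵥ y / s ⬝ᵥ s) := Real.log_le_log hm hlow
  have hlog_le : Real.log (s ⬝ᵥ B *ᵥ s / s ⬝ᵥ s) ≤ s ⬝ᵥ B *ᵥ s / s ⬝ᵥ s - 1 :=
    Real.log_le_sub_one_of_pos (by positivity)
  linarith

/-- Growth bound on the potential `ψ(A) = tr(A) − log det(A)` under a BFGS update with a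
curvature pair satisfying the bounds `m̂`, `M̂` (used in the proof of Lemma 3.2). -/
theorem bfgs_update_psi_bound
    {d : ℕ} (B : Matrix (Fin d) (Fin d) ℝ) (hB : B.PosDef)
    (s y : Fin d → ℝ) (hs : s ≠ 0) (hsy : 0 < s ⬝ᵥ y)
    (mhat Mhat : ℝ) (hm : 0 < mhat) (hmM : mhat ≤ Mhat)
    (hlow : s ⬝ᵥ y / (s ⬝ᵥ s) ≥ mhat) (hup : y ⬝ᵥ y / (s ⬝ᵥ y) ≤ Mhat)
    (Bplus : Matrix (Fin d) (Fin d) ℝ)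
    (hBplus : Bplus =
      B - (s ⬝ᵥ B.mulVec s)⁻¹ • vecMulVec (B.mulVec s) (B.mulVec s) +
        (s ⬝ᵥ y)⁻¹ • vecMulVec y y) :
    Bplus.PosDef ∧
      Bplus.trace - Real.log Bplus.det ≤
        (B.trace - Real.log B.det) + (Mhat - Real.log mhat) :=
  bfgs_update_psi_bound_general B hB s y hsy mhat Mhat hm hlow hup Bplus hBplus
end
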